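/- arXiv:1206.3632 — 5 statements merged into one kernel-verified Lean document; each statement's English description precedes it below -/
import Mathlib

section
/- Let w(x) = Σ_{i=0}^n w_i x^i with w_0, w_n > 0 and w_i ≥ 0 for all i. For 0 < κ < n with w_κ > 0, the equation w_κ x^κ = Σ_{i≠κ} w_i x^i has either zero or exactly two real positive solutions (counted with multiplicity, i.e. possibly a double root). -/
open Polynomial Set

private theorem pellet_key1 (c : ℝ) (i : ℕ) (x : ℝ) :
    x * eval x (derivative (C c * X ^ i)) = c * i * x ^ i := by
  rw [derivative_C_mul_X_pow]
  match i with
  | 0 => simp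
  | (j+1) => simp [pow_succ]; ring

private theorem pellet_key2 (c : ℝ) (i : ℕ) (x : ℝ) :
    x ^ 2 * eval x (derivative (derivative (C c * X ^ i))) = c * (i * ((i:ℝ) - 1)) * x ^ i := by
  rw [derivative_C_mul_X_pow, derivative_C_mul_X_pow]
  match i with
  | 0 => simp
  | 1 => simp
  | (j+2) => simp [pow_succ]; push_cast; ring

private theorem pellet_count (s : Multiset ℝ) (a b : ℝ) (hab : a ≠ b) :
    Multiset.card (s.filter (fun x => a = x ∨ b = x)) = s.count a + s.count b := by
  induction s using Multiset.induction with
  | empty => simp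
  | cons x t ih =>
    rw [Multiset.filter_cons, Multiset.card_add, ih, Multiset.count_cons, Multiset.count_cons]
    by_cases hx : a = x
    · have hbx : ¬ b = x := fun h => hab (hx.trans h.symm)
      rw [if_pos (Or.inl hx), if_pos hx, if_neg hbx]; simp; omega
    · by_cases hbx : b = x
      · rw [if_pos (Or.inr hbx), if_neg hx, if_pos hbx]; simp; omega
      · rw [if_neg (by tauto), if_neg hx, if_neg hbx]; simp

/-- Second root existence for a simple positive root, given positivity of `f`
near `0` and near `∞`. -/
private theorem pellet_second (w0 wκ wn : ℝ) (hw0 : 0 < w0) (hwκ : 0 < wκ) (hwn : 0 < wn)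
    (f : Polynomial ℝ)
    (hsmall : ∀ x : ℝ, 0 < x → x < min 1 (w0 / wκ) → 0 < f.eval x)
    (hlarge : ∀ x : ℝ, max 1 (wκ / wn) < x → 0 < f.eval x)
    (a : ℝ) (ha : 0 < a) (hfa : f.eval a = 0) (hda : (derivative f).eval a ≠ 0) :
    ∃ b, 0 < b ∧ b ≠ a ∧ f.eval b = 0 := by
  set q : Polynomial ℝ := f /ₘ (X - C a) with hq
  have hfq : f = (X - C a) * q := by
    rw [hq, eq_comm]
    exact (mul_divByMonic_eq_iff_isRoot).2 hfa
  have hqa : q.eval a = (derivative f).eval a := by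
    have hd : derivative f = q + (X - C a) * derivative q := by
      rw [hfq, derivative_mul]
      simp [derivative_sub]
    rw [hd]
    simp
  have hcont : Continuous fun y : ℝ => q.eval y := q.continuous_aeval
  have hfy : ∀ y : ℝ, f.eval y = (y - a) * q.eval y := by
    intro y
    rw [hfq]
    simp
  rcases lt_or_gt_of_ne hda with hneg | hpos
  · have hqa' : q.eval a < 0 := by rw [hqa]; exact hneg
    have hU : IsOpen {y : ℝ | q.eval y < 0} := isOpen_lt hcont continuous_const
    rcases Metric.isOpen_iff.1 hU a hqa' with ⟨δ, hδ, hball⟩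
    set x0 : ℝ := max (a + 1) (max 1 (wκ / wn) + 1) with hx0
    have hx0a : a < x0 := lt_of_lt_of_le (by linarith) (le_max_left _ _)
    have hfx0 : 0 < f.eval x0 := hlarge x0 (lt_of_lt_of_le (by linarith) (le_max_right _ _))
    set y : ℝ := min x0 (a + δ/2) with hy
    have hya : a < y := lt_min hx0a (by linarith)
    have hyb : |y - a| < δ := by
      have h1 : y ≤ a + δ/2 := min_le_right _ _
      rw [abs_lt]
      constructor <;> [linarith; linarith]
    have hqy : q.eval y < 0 := hball (by simpa [Real.dist_eq] using hyb)
    have hfyneg : f.eval y < 0 := by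
      rw [hfy y]
      exact mul_neg_of_pos_of_neg (by linarith) hqy
    have hyx0 : y ≤ x0 := min_le_left _ _
    have hivt := intermediate_value_Ioo hyx0
      (f.continuousOn_aeval : ContinuousOn (fun t : ℝ => f.eval t) (Icc y x0))
    have h0mem : (0:ℝ) ∈ Ioo (f.eval y) (f.eval x0) := ⟨hfyneg, hfx0⟩
    rcases hivt h0mem with ⟨b, hbmem, hfb⟩
    refine ⟨b, ?_, ?_, hfb⟩
    · linarith [hbmem.1, hya, ha]
    · intro h
      rw [h] at hbmem
      linarith [hbmem.1, hya]
  · have hqa' : 0 < q.eval a := by rw [hqa]; exact hpos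
    have hU : IsOpen {y : ℝ | 0 < q.eval y} := isOpen_lt continuous_const hcont
    rcases Metric.isOpen_iff.1 hU a hqa' with ⟨δ, hδ, hball⟩
    have ham : min 1 (w0 / wκ) ≤ a := by
      by_contra h
      push_neg at h
      exact absurd hfa (ne_of_gt (hsmall a ha h))
    set m : ℝ := min 1 (w0 / wκ) with hm
    have hmpos : 0 < m := lt_min zero_lt_one (div_pos hw0 hwκ)
    set x1 : ℝ := m / 2 with hx1
    have hx1pos : 0 < x1 := by positivity
    have hx1a : x1 < a := by
      have : x1 < m := by rw [hx1]; linarith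
      linarith
    have hfx1 : 0 < f.eval x1 := hsmall x1 hx1pos (by rw [hx1]; linarith)
    set y : ℝ := max x1 (a - δ/2) with hy
    have hya : y < a := max_lt hx1a (by linarith)
    have hyb : |y - a| < δ := by
      have h1 : a - δ/2 ≤ y := le_max_right _ _
      rw [abs_lt]
      constructor <;> [linarith; linarith]
    have hqy : 0 < q.eval y := hball (by simpa [Real.dist_eq] using hyb)
    have hfyneg : f.eval y < 0 := by
      rw [hfy y]
      exact mul_neg_of_neg_of_pos (by linarith) hqy
    have hx1y : x1 ≤ y := le_max_left _ _
    have hivt := intermediate_value_Ioo' hx1y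
      (f.continuousOn_aeval : ContinuousOn (fun t : ℝ => f.eval t) (Icc x1 y))
    have h0mem : (0:ℝ) ∈ Ioo (f.eval y) (f.eval x1) := ⟨hfyneg, hfx1⟩
    rcases hivt h0mem with ⟨b, hbmem, hfb⟩
    refine ⟨b, ?_, ?_, hfb⟩
    · linarith [hbmem.1, hx1pos]
    · intro h
      rw [h] at hbmem
      linarith [hbmem.2, hya]

/-- Pellet-type lemma: for `w(x) = Σ_{i=0}^n w_i x^i` with nonnegative coefficients,
`w_0, w_n > 0`, and `0 < κ < n` with `w_κ > 0`, the equation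
`w_κ x^κ = Σ_{i ≠ κ} w_i x^i` has either zero or exactly two real positive
solutions, counted with multiplicity. -/
theorem stmt0 (n κ : ℕ) (w : ℕ → ℝ)
    (hκ0 : 0 < κ) (hκn : κ < n)
    (hw0 : 0 < w 0) (hwn : 0 < w n) (hwκ : 0 < w κ)
    (hnn : ∀ i, 0 ≤ w i)
    (f : Polynomial ℝ)
    (hf : f = (∑ i ∈ (Finset.range (n + 1)).erase κ, C (w i) * X ^ i) - C (w κ) * X ^ κ) :
    Multiset.card (f.roots.filter (fun x => 0 < x)) = 0 ∨
      Multiset.card (f.roots.filter (fun x => 0 < x)) = 2 := by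
  set s : Finset ℕ := (Finset.range (n + 1)).erase κ with hs
  have hs0 : (0:ℕ) ∈ s := Finset.mem_erase.2 ⟨hκ0.ne, Finset.mem_range.2 n.succ_pos⟩
  have hsn : n ∈ s := Finset.mem_erase.2 ⟨hκn.ne', Finset.mem_range.2 (by omega)⟩
  -- evaluation formulas
  have heval : ∀ x : ℝ, f.eval x = (∑ i ∈ s, w i * x ^ i) - w κ * x ^ κ := by
    intro x
    rw [hf]
    simp [eval_finset_sum]
  have heval1 : ∀ x : ℝ, x * (derivative f).eval x
      = (∑ i ∈ s, w i * i * x ^ i) - w κ * κ * x ^ κ := by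
    intro x
    rw [hf, derivative_sub, eval_sub, mul_sub, derivative_sum, eval_finset_sum,
      Finset.mul_sum, pellet_key1]
    congr 1
    exact Finset.sum_congr rfl fun i _ => pellet_key1 (w i) i x
  have heval2 : ∀ x : ℝ, x ^ 2 * (derivative (derivative f)).eval x
      = (∑ i ∈ s, w i * ((i:ℝ) * ((i:ℝ) - 1)) * x ^ i)
        - w κ * ((κ:ℝ) * ((κ:ℝ) - 1)) * x ^ κ := by
    intro x
    rw [hf, derivative_sub, derivative_sub, eval_sub, mul_sub, derivative_sum, derivative_sum,
      eval_finset_sum, Finset.mul_sum, pellet_key2]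
    congr 1
    exact Finset.sum_congr rfl fun i _ => pellet_key2 (w i) i x
  -- positivity of the convexity combination
  have hE : ∀ x : ℝ, 0 < x →
      0 < ((κ:ℝ) * (κ + 1)) * f.eval x - 2 * κ * (x * (derivative f).eval x)
        + x ^ 2 * (derivative (derivative f)).eval x := by
    intro x hx
    have h1 : ((κ:ℝ) * (κ + 1)) * f.eval x - 2 * κ * (x * (derivative f).eval x)
        + x ^ 2 * (derivative (derivative f)).eval x
        = ∑ i ∈ s, w i * ((((i:ℝ) - κ) ^ 2 - ((i:ℝ) - κ)) * x ^ i) := by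
      rw [heval, heval1, heval2]
      calc ((κ:ℝ) * (κ + 1)) * ((∑ i ∈ s, w i * x ^ i) - w κ * x ^ κ)
            - 2 * κ * ((∑ i ∈ s, w i * i * x ^ i) - w κ * κ * x ^ κ)
            + ((∑ i ∈ s, w i * ((i:ℝ) * ((i:ℝ) - 1)) * x ^ i)
              - w κ * ((κ:ℝ) * ((κ:ℝ) - 1)) * x ^ κ)
          = ((κ:ℝ) * (κ + 1)) * (∑ i ∈ s, w i * x ^ i)
            - 2 * κ * (∑ i ∈ s, w i * i * x ^ i)
            + ∑ i ∈ s, w i * ((i:ℝ) * ((i:ℝ) - 1)) * x ^ i := by ring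
        _ = ∑ i ∈ s, (((κ:ℝ) * (κ + 1)) * (w i * x ^ i)
              - 2 * κ * (w i * i * x ^ i) + w i * ((i:ℝ) * ((i:ℝ) - 1)) * x ^ i) := by
            rw [Finset.mul_sum, Finset.mul_sum, ← Finset.sum_sub_distrib,
              ← Finset.sum_add_distrib]
        _ = ∑ i ∈ s, w i * ((((i:ℝ) - κ) ^ 2 - ((i:ℝ) - κ)) * x ^ i) :=
            Finset.sum_congr rfl fun i _ => by ring
    rw [h1]
    have hterm : ∀ i ∈ s, 0 ≤ w i * ((((i:ℝ) - κ) ^ 2 - ((i:ℝ) - κ)) * x ^ i) := by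
      intro i hi
      have hiκ : i ≠ κ := (Finset.mem_erase.1 hi).1
      have hd : 0 ≤ (((i:ℝ) - κ) ^ 2 - ((i:ℝ) - κ)) := by
        rcases lt_or_gt_of_ne hiκ with h | h
        · have : (i:ℝ) + 1 ≤ κ := by exact_mod_cast h
          nlinarith
        · have : (κ:ℝ) + 1 ≤ i := by exact_mod_cast h
          nlinarith
      exact mul_nonneg (hnn i) (mul_nonneg hd (pow_nonneg hx.le i))
    have h0 : 0 < w 0 * ((((0:ℕ):ℝ) - κ) ^ 2 - (((0:ℕ):ℝ) - κ)) * x ^ (0:ℕ) := by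
      have hκ1 : (1:ℝ) ≤ κ := by exact_mod_cast hκ0
      simp only [Nat.cast_zero, pow_zero, mul_one]
      nlinarith
    calc (0:ℝ) < w 0 * ((((0:ℕ):ℝ) - κ) ^ 2 - (((0:ℕ):ℝ) - κ)) * x ^ (0:ℕ) := h0
      _ = w 0 * (((((0:ℕ):ℝ) - κ) ^ 2 - (((0:ℕ):ℝ) - κ)) * x ^ (0:ℕ)) := by ring
      _ ≤ ∑ i ∈ s, w i * ((((i:ℝ) - κ) ^ 2 - ((i:ℝ) - κ)) * x ^ i) :=
          Finset.single_le_sum hterm hs0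
  -- non-vanishing of `f`
  have hev0 : f.eval 0 = w 0 := by
    rw [heval]
    rw [Finset.sum_eq_single_of_mem 0 hs0 (fun i _ hne => by simp [zero_pow hne])]
    simp [zero_pow hκ0.ne']
  have fne : f ≠ 0 := by
    intro h
    rw [h] at hev0
    simp at hev0
    linarith
  -- the auxiliary function `g x = f(x) x^{-κ}` and its derivatives
  set k : ℤ := -(κ:ℤ) with hk
  set g : ℝ → ℝ := fun x => f.eval x * x ^ k with hgdef
  set g1 : ℝ → ℝ := fun x =>
    (derivative f).eval x * x ^ k + f.eval x * ((k:ℝ) * x ^ (k - 1)) with hg1def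
  set g2 : ℝ → ℝ := fun x =>
    ((derivative (derivative f)).eval x * x ^ k
      + (derivative f).eval x * ((k:ℝ) * x ^ (k - 1)))
    + ((derivative f).eval x * ((k:ℝ) * x ^ (k - 1))
      + f.eval x * ((k:ℝ) * ((((k - 1 : ℤ)):ℝ) * x ^ (k - 1 - 1)))) with hg2def
  have hg : ∀ x : ℝ, 0 < x → HasDerivAt g (g1 x) x := by
    intro x hx
    exact (f.hasDerivAt x).mul (hasDerivAt_zpow k x (Or.inl hx.ne'))
  have hg1 : ∀ x : ℝ, 0 < x → HasDerivAt g1 (g2 x) x := by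
    intro x hx
    exact (((derivative f).hasDerivAt x).mul (hasDerivAt_zpow k x (Or.inl hx.ne'))).add
      ((f.hasDerivAt x).mul ((hasDerivAt_zpow (k-1) x (Or.inl hx.ne')).const_mul (k:ℝ)))
  have hg2pos : ∀ x : ℝ, 0 < x → 0 < g2 x := by
    intro x hx
    have hB : (0:ℝ) < x ^ (k - 1 - 1) := zpow_pos hx _
    have e1 : x ^ k = x ^ (k - 1 - 1) * x ^ (2:ℕ) := by
      rw [← zpow_natCast x 2, ← zpow_add₀ hx.ne']
      congr 1
      ring
    have e2 : x ^ (k - 1) = x ^ (k - 1 - 1) * x := by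
      rw [← zpow_add_one₀ hx.ne' (k - 1 - 1)]
      congr 1
      ring
    have : g2 x = x ^ (k - 1 - 1) *
        (((κ:ℝ) * (κ + 1)) * f.eval x - 2 * κ * (x * (derivative f).eval x)
          + x ^ 2 * (derivative (derivative f)).eval x) := by
      rw [hg2def]
      simp only []
      rw [e1, e2]
      push_cast [hk]
      ring
    rw [this]
    exact mul_pos hB (hE x hx)
  have hg1cont : ContinuousOn g1 (Ioi (0:ℝ)) :=
    fun x hx => ((hg1 x hx).continuousAt).continuousWithinAt
  have hmono : StrictMonoOn g1 (Ioi (0:ℝ)) := by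
    apply strictMonoOn_of_deriv_pos (convex_Ioi 0) hg1cont
    intro x hx
    rw [interior_Ioi] at hx
    rw [(hg1 x hx).deriv]
    exact hg2pos x hx
  have hrolle : ∀ a b : ℝ, 0 < a → a < b → f.eval a = 0 → f.eval b = 0 →
      ∃ c ∈ Ioo a b, g1 c = 0 := by
    intro a b ha hab hfa hfb
    apply exists_hasDerivAt_eq_zero hab
    · intro x hx
      exact ((hg x (lt_of_lt_of_le ha hx.1)).continuousAt).continuousWithinAt
    · rw [hgdef]; simp only []; rw [hfa, hfb, zero_mul, zero_mul]
    · intro x hx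
      exact hg x (ha.trans hx.1)
  -- no three distinct positive roots
  have hatmost2 : ∀ a b c : ℝ, 0 < a → a < b → b < c →
      f.eval a = 0 → f.eval b = 0 → f.eval c = 0 → False := by
    intro a b c ha hab hbc hfa hfb hfc
    obtain ⟨p, hp, hgp⟩ := hrolle a b ha hab hfa hfb
    obtain ⟨r, hr, hgr⟩ := hrolle b c (ha.trans hab) hbc hfb hfc
    have hpr : p < r := hp.2.trans hr.1
    have := hmono (show p ∈ Ioi (0:ℝ) from ha.trans hp.1) (show r ∈ Ioi (0:ℝ) from by
      have : (0:ℝ) < b := ha.trans hab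
      exact this.trans hr.1) hpr
    rw [hgp, hgr] at this
    exact lt_irrefl 0 this
  have h3 : ∀ p q r : ℝ, 0 < p → 0 < q → 0 < r → p ≠ q → p ≠ r → q ≠ r →
      f.eval p = 0 → f.eval q = 0 → f.eval r = 0 → False := by
    intro p q r hp hq hr hpq hpr hqr hfp hfq hfr
    rcases lt_trichotomy p q with h1 | h1 | h1
    · rcases lt_trichotomy q r with h2 | h2 | h2
      · exact hatmost2 p q r hp h1 h2 hfp hfq hfr
      · exact hqr h2
      · rcases lt_trichotomy p r with h3 | h3 | h3
        · exact hatmost2 p r q hp h3 h2 hfp hfr hfq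
        · exact hpr h3
        · exact hatmost2 r p q hr h3 h1 hfr hfp hfq
    · exact hpq h1
    · rcases lt_trichotomy p r with h2 | h2 | h2
      · exact hatmost2 q p r hq h1 h2 hfq hfp hfr
      · exact hpr h2
      · rcases lt_trichotomy q r with h3 | h3 | h3
        · exact hatmost2 q r p hq h3 h2 hfq hfr hfp
        · exact hqr h3
        · exact hatmost2 r q p hr h3 h1 hfr hfq hfp
  -- a positive double root is the unique positive root
  have hdouble_unique : ∀ a : ℝ, 0 < a → f.eval a = 0 → (derivative f).eval a = 0 →
      ∀ b : ℝ, 0 < b → f.eval b = 0 → b = a := by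
    intro a ha hfa hda b hb hfb
    have hg1a : g1 a = 0 := by
      rw [hg1def]
      simp only []
      rw [hfa, hda]
      ring
    by_contra hne
    rcases lt_or_gt_of_ne hne with h | h
    · obtain ⟨c, hc, hgc⟩ := hrolle b a hb h hfb hfa
      have := hmono (show c ∈ Ioi (0:ℝ) from hb.trans hc.1) (show a ∈ Ioi (0:ℝ) from ha) hc.2
      rw [hgc, hg1a] at this
      exact lt_irrefl 0 this
    · obtain ⟨c, hc, hgc⟩ := hrolle a b ha h hfa hfb
      have := hmono (show a ∈ Ioi (0:ℝ) from ha) (show c ∈ Ioi (0:ℝ) from ha.trans hc.1) hc.1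
      rw [hgc, hg1a] at this
      exact lt_irrefl 0 this
  -- bounds giving positivity near 0 and ∞
  have hsumge : ∀ (x : ℝ) (j : ℕ), 0 < x → j ∈ s → w j * x ^ j ≤ ∑ i ∈ s, w i * x ^ i := by
    intro x j hx hj
    exact Finset.single_le_sum (fun i _ => mul_nonneg (hnn i) (pow_nonneg hx.le i)) hj
  have hsmall : ∀ x : ℝ, 0 < x → x < min 1 (w 0 / w κ) → 0 < f.eval x := by
    intro x hx hxm
    have hx1 : x ≤ 1 := le_of_lt (lt_of_lt_of_le hxm (min_le_left _ _))
    have hx2 : x < w 0 / w κ := lt_of_lt_of_le hxm (min_le_right _ _)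
    have h1 : x ^ κ ≤ x ^ 1 := pow_le_pow_of_le_one hx.le hx1 hκ0
    have h2 : w κ * x ^ κ ≤ w κ * x := by
      have := mul_le_mul_of_nonneg_left h1 hwκ.le
      simpa using this
    have h3 : w κ * x < w 0 := by
      rw [lt_div_iff₀ hwκ] at hx2
      linarith [mul_comm (w κ) x]
    have h4 : w 0 * x ^ 0 ≤ ∑ i ∈ s, w i * x ^ i := hsumge x 0 hx hs0
    rw [heval]
    simp only [pow_zero, mul_one] at h4
    linarith
  have hlarge : ∀ x : ℝ, max 1 (w κ / w n) < x → 0 < f.eval x := by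
    intro x hxm
    have hx1 : (1:ℝ) < x := lt_of_le_of_lt (le_max_left _ _) hxm
    have hx : (0:ℝ) < x := lt_trans zero_lt_one hx1
    have hx2 : w κ / w n < x := lt_of_le_of_lt (le_max_right _ _) hxm
    have h1 : x ^ κ ≤ x ^ (n - 1) := pow_le_pow_right₀ hx1.le (by omega)
    have h2 : w κ < w n * x := by
      rw [div_lt_iff₀ hwn] at hx2
      linarith
    have h3 : w κ * x ^ κ < w n * x ^ n := by
      calc w κ * x ^ κ ≤ w κ * x ^ (n - 1) := mul_le_mul_of_nonneg_left h1 hwκ.le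
        _ < (w n * x) * x ^ (n - 1) :=
            mul_lt_mul_of_pos_right h2 (pow_pos hx _)
        _ = w n * x ^ n := by
            have hxn : x ^ n = x ^ (n - 1) * x := by
              rw [← pow_succ]
              congr 1
              omega
            rw [hxn]
            ring
    have h4 : w n * x ^ n ≤ ∑ i ∈ s, w i * x ^ i := hsumge x n hx hsn
    rw [heval]
    linarith
  -- multiplicity computations
  have hmult2 : ∀ a : ℝ, 0 < a → f.eval a = 0 → (derivative f).eval a = 0 →
      rootMultiplicity a f = 2 := by
    intro a ha hfa hda
    have hf2 : 0 < (derivative (derivative f)).eval a := by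
      have := hE a ha
      rw [hfa, hda] at this
      have ha2 : (0:ℝ) < a ^ 2 := by positivity
      nlinarith
    have hf2ne : ¬ IsRoot (derivative (derivative f)) a := by
      intro h
      rw [IsRoot.def] at h
      rw [h] at hf2
      exact lt_irrefl 0 hf2
    have h1 : 0 < rootMultiplicity a f := (rootMultiplicity_pos fne).2 hfa
    have hd1 : rootMultiplicity a (derivative f) = rootMultiplicity a f - 1 :=
      derivative_rootMultiplicity_of_root hfa
    have hdfne : derivative f ≠ 0 := by
      intro h
      rw [h] at hf2
      simp at hf2
    have h2 : 0 < rootMultiplicity a (derivative f) :=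
      (rootMultiplicity_pos hdfne).2 hda
    have hd2 : rootMultiplicity a (derivative (derivative f))
        = rootMultiplicity a (derivative f) - 1 :=
      derivative_rootMultiplicity_of_root hda
    have h3 : rootMultiplicity a (derivative (derivative f)) = 0 :=
      rootMultiplicity_eq_zero hf2ne
    omega
  have hmult1 : ∀ a : ℝ, 0 < a → f.eval a = 0 → (derivative f).eval a ≠ 0 →
      rootMultiplicity a f = 1 := by
    intro a ha hfa hda
    have h1 : 0 < rootMultiplicity a f := (rootMultiplicity_pos fne).2 hfa
    have hd1 : rootMultiplicity a (derivative f) = rootMultiplicity a f - 1 :=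
      derivative_rootMultiplicity_of_root hfa
    have h3 : rootMultiplicity a (derivative f) = 0 :=
      rootMultiplicity_eq_zero hda
    omega
  -- final case analysis
  by_cases hex : ∃ a : ℝ, 0 < a ∧ f.eval a = 0
  · right
    obtain ⟨a, ha, hfa⟩ := hex
    by_cases hda : (derivative f).eval a = 0
    · -- double root case
      have hfilter : f.roots.filter (fun x => 0 < x) = f.roots.filter (fun x => a = x) := by
        apply Multiset.filter_congr
        intro x hx
        have hxroot : f.eval x = 0 := ((mem_roots'.1 hx).2 : IsRoot f x)
        constructor
        · intro hxpos
          exact (hdouble_unique a ha hfa hda x hxpos hxroot).symm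
        · intro h
          rw [← h]
          exact ha
      rw [hfilter, ← Multiset.count_eq_card_filter_eq, count_roots]
      exact hmult2 a ha hfa hda
    · -- two simple roots
      obtain ⟨b, hb, hba, hfb⟩ := pellet_second (w 0) (w κ) (w n) hw0 hwκ hwn f
        hsmall hlarge a ha hfa hda
      have hdb : (derivative f).eval b ≠ 0 := by
        intro h
        exact hba (hdouble_unique b hb hfb h a ha hfa).symm
      have hfilter : f.roots.filter (fun x => 0 < x)
          = f.roots.filter (fun x => a = x ∨ b = x) := by
        apply Multiset.filter_congr
        intro x hx
        have hxroot : f.eval x = 0 := ((mem_roots'.1 hx).2 : IsRoot f x)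
        constructor
        · intro hxpos
          by_contra hcon
          push_neg at hcon
          exact h3 x a b hxpos ha hb (fun h => hcon.1 h.symm) (fun h => hcon.2 h.symm)
            hba.symm hxroot hfa hfb
        · intro h
          rcases h with h | h
          · rw [← h]; exact ha
          · rw [← h]; exact hb
      rw [hfilter, pellet_count _ a b (fun h => hba h.symm), count_roots, count_roots,
        hmult1 a ha hfa hda, hmult1 b hb hfb hdb]
  · left
    rw [Multiset.card_eq_zero, Multiset.filter_eq_nil]
    intro x hx hxpos
    exact hex ⟨x, hxpos, ((mem_roots'.1 hx).2 : IsRoot f x)⟩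
end

section
/- Let A(x) = Σ_{i=0}^n A_i x^i be a regular m×m complex matrix polynomial with det A_n ≠ 0, and let s_n be the unique positive solution of x^n = Σ_{i=0}^{n-1} ‖A_n^{-1} A_i‖ x^i. Then every eigenvalue λ of A(x) satisfies |λ| ≤ s_n. -/
open Polynomial

/-- The spectral norm (operator 2-norm) of a complex square matrix. -/
noncomputable def specNorm {m : ℕ} (A : Matrix (Fin m) (Fin m) ℂ) : ℝ :=
  ‖Matrix.toEuclideanCLM (𝕜 := ℂ) A‖

/-- The scalar polynomial `det A(x)` of the matrix polynomial with coefficients `A i`. -/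
noncomputable def detPoly {m : ℕ} (n : ℕ) (A : ℕ → Matrix (Fin m) (Fin m) ℂ) : Polynomial ℂ :=
  (∑ i ∈ Finset.range (n + 1), (A i).map (fun a => C a * X ^ i)).det

lemma sum_mulVec' {m : ℕ} {ι : Type*} (t : Finset ι) (f : ι → Matrix (Fin m) (Fin m) ℂ)
    (v : Fin m → ℂ) : (∑ i ∈ t, f i).mulVec v = ∑ i ∈ t, (f i).mulVec v := by
  calc (∑ i ∈ t, f i).mulVec v = Matrix.toLin' (∑ i ∈ t, f i) v :=
        (Matrix.toLin'_apply _ _).symm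
    _ = ∑ i ∈ t, Matrix.toLin' (f i) v := by
        rw [map_sum]; exact LinearMap.sum_apply _ _ _
    _ = ∑ i ∈ t, (f i).mulVec v :=
        Finset.sum_congr rfl fun i _ => Matrix.toLin'_apply _ _

set_option maxRecDepth 8000 in
/-- If `det A_n ≠ 0` and `s_n` is the positive solution of
`x^n = Σ_{i<n} ‖A_n⁻¹ A_i‖ x^i`, then every eigenvalue `λ` of `A(x)`
(i.e. every root of `det A(x)`) satisfies `|λ| ≤ s_n`. -/
theorem stmt3 (m n : ℕ) (A : ℕ → Matrix (Fin m) (Fin m) ℂ)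
    (hreg : detPoly n A ≠ 0) (hdet : (A n).det ≠ 0)
    (s : ℝ) (hs : 0 < s)
    (hseq : s ^ n = ∑ i ∈ Finset.range n, specNorm ((A n)⁻¹ * A i) * s ^ i)
    (lam : ℂ) (hlam : (detPoly n A).IsRoot lam) :
    ‖lam‖ ≤ s := by
  -- n ≠ 0
  rcases Nat.eq_zero_or_pos n with hn | hn
  · subst hn; simp at hseq
  -- eval of detPoly
  have hmap : (∑ i ∈ Finset.range (n + 1), (A i).map (fun a => C a * X ^ i)).map
      (Polynomial.eval lam) = ∑ i ∈ Finset.range (n + 1), lam ^ i • A i := by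
    ext j k
    simp only [Matrix.map_apply, Matrix.sum_apply]
    rw [Polynomial.eval_finset_sum]
    refine Finset.sum_congr rfl fun i _ => ?_
    rw [Polynomial.eval_mul, Polynomial.eval_pow, Polynomial.eval_C, Polynomial.eval_X,
      Matrix.smul_apply, smul_eq_mul, mul_comm]
  have heval : (∑ i ∈ Finset.range (n + 1), lam ^ i • A i).det = 0 := by
    rw [← hmap]
    exact ((Polynomial.evalRingHom lam).map_det _).symm.trans hlam
  obtain ⟨v, hv0, hv⟩ := (Matrix.exists_mulVec_eq_zero_iff).mpr heval
  have hinv : (A n)⁻¹ * A n = 1 := Matrix.nonsing_inv_mul _ (Ne.isUnit hdet)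
  -- lam^n • v = - ∑ ...
  have key : lam ^ n • v = - ∑ i ∈ Finset.range n, lam ^ i • ((A n)⁻¹ * A i).mulVec v := by
    have h2 : ((A n)⁻¹ * (∑ i ∈ Finset.range (n + 1), lam ^ i • A i)).mulVec v = 0 := by
      rw [← Matrix.mulVec_mulVec, hv, Matrix.mulVec_zero]
    rw [Finset.mul_sum] at h2
    rw [Finset.sum_range_succ] at h2
    have h3 : (A n)⁻¹ * (lam ^ n • A n) = lam ^ n • (1 : Matrix (Fin m) (Fin m) ℂ) := by
      rw [Matrix.mul_smul, hinv]
    rw [h3] at h2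
    rw [Matrix.add_mulVec, sum_mulVec'] at h2
    have h4 : (lam ^ n • (1 : Matrix (Fin m) (Fin m) ℂ)).mulVec v = lam ^ n • v := by
      rw [Matrix.smul_mulVec, Matrix.one_mulVec]
    rw [h4] at h2
    have h5 : ∑ i ∈ Finset.range n, ((A n)⁻¹ * lam ^ i • A i).mulVec v
        = ∑ i ∈ Finset.range n, lam ^ i • ((A n)⁻¹ * A i).mulVec v :=
      Finset.sum_congr rfl fun i _ => by
        rw [Matrix.mul_smul, Matrix.smul_mulVec]
    rw [← h5]
    exact eq_neg_of_add_eq_zero_left (by rwa [add_comm] at h2)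
  -- move to Euclidean space
  set eL := (WithLp.linearEquiv 2 ℂ (Fin m → ℂ)).symm with heL
  have hev : eL v ≠ 0 := fun h => hv0 ((LinearEquiv.map_eq_zero_iff eL).mp h)
  have hnv : (0:ℝ) < ‖eL v‖ := norm_pos_iff.mpr hev
  set t := ‖lam‖ with ht
  have ht0 : 0 ≤ t := norm_nonneg lam
  have happ : ∀ B : Matrix (Fin m) (Fin m) ℂ,
      eL (B.mulVec v) = Matrix.toEuclideanCLM (𝕜 := ℂ) B (eL v) := fun B => rfl
  have hmain : t ^ n * ‖eL v‖ ≤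
      ∑ i ∈ Finset.range n, specNorm ((A n)⁻¹ * A i) * t ^ i * ‖eL v‖ := by
    have h1 : ‖eL (lam ^ n • v)‖ = t ^ n * ‖eL v‖ := by
      rw [map_smul, norm_smul, norm_pow]
    have h2 : eL (lam ^ n • v) = - ∑ i ∈ Finset.range n,
        lam ^ i • (Matrix.toEuclideanCLM (𝕜 := ℂ) ((A n)⁻¹ * A i)) (eL v) := by
      rw [key, map_neg, map_sum]
      exact neg_inj.mpr (Finset.sum_congr rfl fun i _ => by rw [map_smul, happ])
    calc t ^ n * ‖eL v‖ = ‖eL (lam ^ n • v)‖ := h1.symm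
      _ = ‖∑ i ∈ Finset.range n,
          lam ^ i • (Matrix.toEuclideanCLM (𝕜 := ℂ) ((A n)⁻¹ * A i)) (eL v)‖ := by
          rw [h2, norm_neg]
      _ ≤ ∑ i ∈ Finset.range n,
          ‖lam ^ i • (Matrix.toEuclideanCLM (𝕜 := ℂ) ((A n)⁻¹ * A i)) (eL v)‖ :=
          norm_sum_le _ _
      _ ≤ ∑ i ∈ Finset.range n, specNorm ((A n)⁻¹ * A i) * t ^ i * ‖eL v‖ := by
          refine Finset.sum_le_sum fun i _ => ?_
          rw [norm_smul, norm_pow]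
          have hop := (Matrix.toEuclideanCLM (𝕜 := ℂ) ((A n)⁻¹ * A i)).le_opNorm (eL v)
          calc t ^ i * ‖(Matrix.toEuclideanCLM (𝕜 := ℂ) ((A n)⁻¹ * A i)) (eL v)‖
              ≤ t ^ i * (specNorm ((A n)⁻¹ * A i) * ‖eL v‖) :=
                mul_le_mul_of_nonneg_left hop (pow_nonneg ht0 i)
            _ = specNorm ((A n)⁻¹ * A i) * t ^ i * ‖eL v‖ := by ring
  have hineq : t ^ n ≤ ∑ i ∈ Finset.range n, specNorm ((A n)⁻¹ * A i) * t ^ i := by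
    rw [← Finset.sum_mul] at hmain
    exact le_of_mul_le_mul_right hmain hnv
  -- final scalar argument
  by_contra hts
  push_neg at hts
  have htpos : 0 < t := lt_trans hs hts
  obtain ⟨k, rfl⟩ : ∃ k, n = k + 1 := ⟨n - 1, (Nat.succ_pred_eq_of_pos hn).symm⟩
  have hts1 : (1:ℝ) ≤ t / s := le_of_lt ((one_lt_div hs).mpr hts)
  have hb : ∀ i ∈ Finset.range (k + 1),
      specNorm ((A (k+1))⁻¹ * A i) * t ^ i ≤
        specNorm ((A (k+1))⁻¹ * A i) * s ^ i * (t / s) ^ k := by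
    intro i hi
    have hik : i ≤ k := Nat.lt_succ_iff.mp (Finset.mem_range.mp hi)
    have h1 : (t / s) ^ i ≤ (t / s) ^ k := pow_le_pow_right₀ hts1 hik
    have h2 : t ^ i = s ^ i * (t / s) ^ i := by
      rw [div_pow]
      field_simp
    rw [h2, ← mul_assoc]
    exact mul_le_mul_of_nonneg_left h1 (mul_nonneg (norm_nonneg _) (pow_nonneg hs.le i))
  have hsum : ∑ i ∈ Finset.range (k + 1), specNorm ((A (k+1))⁻¹ * A i) * t ^ i ≤
      s * t ^ k := by
    calc ∑ i ∈ Finset.range (k + 1), specNorm ((A (k+1))⁻¹ * A i) * t ^ i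
        ≤ ∑ i ∈ Finset.range (k + 1),
          specNorm ((A (k+1))⁻¹ * A i) * s ^ i * (t / s) ^ k := Finset.sum_le_sum hb
      _ = (∑ i ∈ Finset.range (k + 1), specNorm ((A (k+1))⁻¹ * A i) * s ^ i) * (t / s) ^ k := by
          rw [Finset.sum_mul]
      _ = s ^ (k + 1) * (t / s) ^ k := by rw [← hseq]
      _ = s * t ^ k := by
          rw [div_pow, pow_succ]
          field_simp
  have hlt : s * t ^ k < t ^ (k + 1) := by
    rw [pow_succ]
    have := mul_lt_mul_of_pos_left hts (pow_pos htpos k)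
    linarith [mul_lt_mul_of_pos_right hts (pow_pos htpos k)]
  linarith [hineq, hsum]
end

section
/- Let A(x) = Σ_{i=0}^n A_i x^i be a regular m×m complex matrix polynomial with det A_0 ≠ 0, and let t_0 be the unique positive solution of 1 = Σ_{i=1}^{n} ‖A_0^{-1} A_i‖ x^i. Then every eigenvalue λ of A(x) satisfies |λ| ≥ t_0. -/
open Polynomial

set_option maxHeartbeats 1000000 in
set_option synthInstance.maxHeartbeats 1000000 in
/-- If `det A_0 ≠ 0` and `t_0` is the positive solution of
`1 = Σ_{i=1}^n ‖A_0⁻¹ A_i‖ x^i`, then every eigenvalue `λ` of `A(x)`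
(i.e. every root of `det A(x)`) satisfies `|λ| ≥ t_0`. -/
theorem stmt4 (m n : ℕ) (A : ℕ → Matrix (Fin m) (Fin m) ℂ)
    (hreg : detPoly n A ≠ 0) (hdet : (A 0).det ≠ 0)
    (t : ℝ) (ht : 0 < t)
    (hteq : (1 : ℝ) = ∑ i ∈ Finset.Icc 1 n, specNorm ((A 0)⁻¹ * A i) * t ^ i)
    (lam : ℂ) (hlam : (detPoly n A).IsRoot lam) :
    t ≤ ‖lam‖ := by
  by_contra hcon
  push_neg at hcon
  have habs : (0:ℝ) ≤ ‖lam‖ := norm_nonneg lam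
  have hev : (detPoly n A).eval lam
      = (∑ i ∈ Finset.range (n + 1), lam ^ i • A i).det := by
    unfold detPoly
    rw [← coe_evalRingHom, RingHom.map_det, RingHom.mapMatrix_apply]
    congr 1
    ext j k
    simp only [Matrix.map_apply, Matrix.sum_apply, Matrix.smul_apply, smul_eq_mul]
    rw [map_sum]
    refine Finset.sum_congr rfl fun i _ => ?_
    simp only [map_mul, map_pow, coe_evalRingHom, eval_C, eval_X]
    ring
  have hS : (∑ i ∈ Finset.range (n + 1), lam ^ i • A i).det = 0 := by
    rw [← hev]; exact hlam
  set B : Matrix (Fin m) (Fin m) ℂ :=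
    ∑ i ∈ Finset.Icc 1 n, lam ^ i • ((A 0)⁻¹ * A i) with hB
  have hu0 : IsUnit (A 0).det := isUnit_iff_ne_zero.mpr hdet
  have hfac : (∑ i ∈ Finset.range (n + 1), lam ^ i • A i) = A 0 * (1 + B) := by
    rw [mul_add, mul_one, hB, Finset.mul_sum]
    have h1 : ∀ i, A 0 * (lam ^ i • ((A 0)⁻¹ * A i)) = lam ^ i • A i := by
      intro i
      rw [Matrix.mul_smul, ← Matrix.mul_assoc, Matrix.mul_nonsing_inv _ hu0, Matrix.one_mul]
    simp_rw [h1]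
    rw [Finset.sum_range_succ', show Finset.Icc 1 n = Finset.Ico 1 (n+1) by rw [Finset.Ico_add_one_right_eq_Icc],
      Finset.sum_Ico_eq_sum_range]
    simp [add_comm]
  -- norm bound on B
  have hnorm : ‖Matrix.toEuclideanCLM (𝕜 := ℂ) B‖ < 1 := by
    have hmap : Matrix.toEuclideanCLM (𝕜 := ℂ) B
        = ∑ i ∈ Finset.Icc 1 n, lam ^ i • Matrix.toEuclideanCLM (𝕜 := ℂ) ((A 0)⁻¹ * A i) := by
      rw [hB, map_sum]
      simp [map_smul]
    calc ‖Matrix.toEuclideanCLM (𝕜 := ℂ) B‖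
        ≤ ∑ i ∈ Finset.Icc 1 n, ‖lam ^ i • Matrix.toEuclideanCLM (𝕜 := ℂ) ((A 0)⁻¹ * A i)‖ := by
          rw [hmap]; exact norm_sum_le _ _
      _ = ∑ i ∈ Finset.Icc 1 n, specNorm ((A 0)⁻¹ * A i) * ‖lam‖ ^ i := by
          apply Finset.sum_congr rfl
          intro i _
          rw [norm_smul (lam ^ i) (Matrix.toEuclideanCLM (𝕜 := ℂ) ((A 0)⁻¹ * A i)),
            norm_pow, mul_comm]
          rfl
      _ < ∑ i ∈ Finset.Icc 1 n, specNorm ((A 0)⁻¹ * A i) * t ^ i := by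
          -- there must be a nonzero term
          have hex : ∃ i ∈ Finset.Icc 1 n, specNorm ((A 0)⁻¹ * A i) ≠ 0 := by
            by_contra hall
            push_neg at hall
            rw [Finset.sum_eq_zero (fun i hi => by rw [hall i hi, zero_mul])] at hteq
            exact one_ne_zero hteq
          obtain ⟨i₀, hi₀, hni₀⟩ := hex
          apply Finset.sum_lt_sum
          · intro i hi
            apply mul_le_mul_of_nonneg_left (pow_le_pow_left₀ habs hcon.le i) (norm_nonneg _)
          · refine ⟨i₀, hi₀, ?_⟩
            apply mul_lt_mul_of_pos_left _ ((norm_nonneg _).lt_of_ne (Ne.symm hni₀))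
            exact pow_lt_pow_left₀ hcon habs (by have := (Finset.mem_Icc.mp hi₀).1; omega)
      _ = 1 := hteq.symm
  -- 1 + B is a unit
  have hunit : IsUnit ((1 : Matrix (Fin m) (Fin m) ℂ) + B) := by
    have h1 : IsUnit ((1 : EuclideanSpace ℂ (Fin m) →L[ℂ] EuclideanSpace ℂ (Fin m))
        + Matrix.toEuclideanCLM (𝕜 := ℂ) B) := by
      have := (Units.oneSub (-(Matrix.toEuclideanCLM (𝕜 := ℂ) B)) (by rwa [norm_neg])).isUnit
      rwa [Units.val_oneSub, sub_neg_eq_add] at this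
    have h2 : Matrix.toEuclideanCLM (𝕜 := ℂ) (1 + B)
        = 1 + Matrix.toEuclideanCLM (𝕜 := ℂ) B := by simp
    have h3 := h1
    rw [← h2] at h3
    rw [← StarAlgEquiv.symm_apply_apply (Matrix.toEuclideanCLM (𝕜 := ℂ)) (1 + B)]
    exact h3.map (Matrix.toEuclideanCLM (𝕜 := ℂ)).symm.toRingEquiv
  -- contradiction
  have : (∑ i ∈ Finset.range (n + 1), lam ^ i • A i).det ≠ 0 := by
    rw [hfac, Matrix.det_mul]
    exact mul_ne_zero hdet (Matrix.isUnit_iff_isUnit_det _ |>.mp hunit).ne_zero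
  exact this hS
end

section
/- Let P(x), Q(x) be m×m complex matrix polynomials and Γ the circle of radius r > 0 centered at 0. If P(x)*P(x) − Q(x)*Q(x) is positive definite for all x with |x| = r, then det P(x) and det(P(x)+Q(x)) have the same number of roots (with multiplicity) in the open disk |x| < r. -/
open Polynomial Matrix
open scoped ComplexOrder
open Metric Real Complex

open Polynomial Metric Real Complex

lemma logDeriv_poly_eval (f : Polynomial ℂ) (x : ℂ) :
    logDeriv (fun y => f.eval y) x = f.derivative.eval x / f.eval x := by
  rw [logDeriv_apply, Polynomial.deriv]

lemma circleIntegrable_logDeriv (f : Polynomial ℂ) {r : ℝ} (hr : 0 ≤ r)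
    (hf : ∀ x ∈ sphere (0:ℂ) r, f.eval x ≠ 0) :
    CircleIntegrable (logDeriv fun y => f.eval y) 0 r := by
  apply ContinuousOn.circleIntegrable hr
  have h : ContinuousOn (fun y => f.derivative.eval y / f.eval y) (sphere (0:ℂ) r) :=
    ContinuousOn.div (f.derivative.continuous_aeval.continuousOn)
      (f.continuous_aeval.continuousOn) hf
  exact h.congr fun y _ => logDeriv_poly_eval f y

lemma circleIntegral_add {f g : ℂ → ℂ} {c : ℂ} {R : ℝ} (hf : CircleIntegrable f c R)
    (hg : CircleIntegrable g c R) :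
    (∮ z in C(c, R), (f z + g z)) = (∮ z in C(c, R), f z) + ∮ z in C(c, R), g z := by
  simp only [circleIntegral, smul_add]
  exact intervalIntegral.integral_add hf.out hg.out

lemma circleIntegral_inv_sub_of_outside {z : ℂ} {r : ℝ} (hr : 0 ≤ r) (hz : r < ‖z‖) :
    (∮ x in C((0:ℂ), r), (x - z)⁻¹) = 0 := by
  have hzb : ∀ x ∈ closedBall (0:ℂ) r, x - z ≠ 0 := by
    intro x hx h
    rw [mem_closedBall, Complex.dist_eq, sub_zero] at hx
    rw [sub_eq_zero] at h
    exact absurd (h ▸ hx) (not_le.2 hz)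
  apply Complex.circleIntegral_eq_zero_of_differentiable_on_off_countable hr Set.countable_empty
  · exact ContinuousOn.inv₀ ((continuousOn_id.sub continuousOn_const)) hzb
  · intro x hx
    exact DifferentiableAt.inv ((differentiableAt_id).sub_const z)
      (hzb x (ball_subset_closedBall hx.1))

open Polynomial Metric Real Complex

lemma prod_eval_ne_zero (s : Multiset ℂ) (c : ℂ) (hc : c ≠ 0) (x : ℂ) (hx : ∀ z ∈ s, x ≠ z) :
    (Polynomial.C c * (s.map (fun a => X - Polynomial.C a)).prod).eval x ≠ 0 := by
  simp only [eval_mul, eval_C, eval_multiset_prod, Multiset.map_map]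
  refine mul_ne_zero hc (Multiset.prod_ne_zero ?_)
  simp only [Multiset.mem_map]
  rintro ⟨z, hz, hzz⟩
  simp only [Function.comp_apply, eval_sub, eval_X, eval_C] at hzz
  exact hx z hz (sub_eq_zero.mp hzz)

lemma count_integral (r : ℝ) (hr : 0 < r) (c : ℂ) (hc : c ≠ 0) (s : Multiset ℂ)
    (hs : ∀ z ∈ s, ‖z‖ ≠ r) :
    (∮ x in C((0:ℂ), r),
        logDeriv (fun y => (Polynomial.C c * (s.map (fun a => X - Polynomial.C a)).prod).eval y) x)
      = 2 * π * I * (Multiset.card (s.filter (fun z => ‖z‖ < r)) : ℂ) := by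
  induction s using Multiset.induction with
  | empty =>
    simp only [Multiset.map_zero, Multiset.prod_zero, mul_one, eval_C]
    rw [show (logDeriv fun _ : ℂ => c) = 0 from logDeriv_const c]
    simp [circleIntegral]
  | cons z s ih =>
    have hz : ‖z‖ ≠ r := hs z (Multiset.mem_cons_self z s)
    have hs' : ∀ w ∈ s, ‖w‖ ≠ r := fun w hw => hs w (Multiset.mem_cons_of_mem hw)
    have hxne : ∀ x ∈ sphere (0:ℂ) r, ∀ w ∈ (z ::ₘ s), x ≠ w := by
      intro x hx w hw h
      rw [mem_sphere, Complex.dist_eq, sub_zero] at hx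
      exact hs w hw (h ▸ hx)
    set g := Polynomial.C c * (s.map (fun a => X - Polynomial.C a)).prod with hg
    have hfg : Polynomial.C c * ((z ::ₘ s).map (fun a => X - Polynomial.C a)).prod
        = (X - Polynomial.C z) * g := by
      rw [hg, Multiset.map_cons, Multiset.prod_cons]; ring
    rw [hfg]
    -- pointwise identity on the sphere
    have key : ∀ x ∈ sphere (0:ℂ) r,
        logDeriv (fun y => ((X - Polynomial.C z) * g).eval y) x
          = (x - z)⁻¹ + logDeriv (fun y => g.eval y) x := by
      intro x hx
      have h1 : (fun y => ((X - Polynomial.C z) * g).eval y)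
          = fun y => (X - Polynomial.C z).eval y * g.eval y := by
        funext y; rw [eval_mul]
      have hlz : logDeriv (fun y => (X - Polynomial.C z).eval y) x = (x - z)⁻¹ := by
        have h2 : (fun y => (X - Polynomial.C z).eval y) = fun y => y - z := by
          funext y; simp
        rw [h2, logDeriv_apply, deriv_sub_const, deriv_id'']
        simp [one_div]
      rw [h1, logDeriv_mul x ?_ ?_ ?_ ?_, hlz]
      · simp only [eval_sub, eval_X, eval_C, sub_ne_zero]
        exact hxne x hx z (Multiset.mem_cons_self z s)
      · exact prod_eval_ne_zero s c hc x (fun w hw => hxne x hx w (Multiset.mem_cons_of_mem hw))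
      · exact (X - Polynomial.C z).differentiableAt
      · exact g.differentiableAt
    rw [circleIntegral.integral_congr hr.le key]
    have hint1 : CircleIntegrable (fun x : ℂ => (x - z)⁻¹) 0 r := by
      apply ContinuousOn.circleIntegrable hr.le
      apply ContinuousOn.inv₀ (continuousOn_id.sub continuousOn_const)
      intro x hx h
      rw [mem_sphere, Complex.dist_eq, sub_zero] at hx
      exact hz ((show x = z from sub_eq_zero.mp h) ▸ hx)
    have hint2 : CircleIntegrable (logDeriv fun y => g.eval y) 0 r :=
      circleIntegrable_logDeriv g hr.le (fun x hx => prod_eval_ne_zero s c hc x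
        (fun w hw => hxne x hx w (Multiset.mem_cons_of_mem hw)))
    rw [circleIntegral_add hint1 hint2, ih hs']
    rcases lt_or_gt_of_ne hz with h | h
    · rw [circleIntegral.integral_sub_inv_of_mem_ball (by simpa [Complex.dist_eq] using h)]
      rw [Multiset.filter_cons_of_pos _ (by simpa using h)]
      push_cast [Multiset.card_cons]
      ring
    · rw [circleIntegral_inv_sub_of_outside hr.le h]
      rw [Multiset.filter_cons_of_neg _ (by simp [not_lt.2 h.le])]
      ring

open Polynomial Metric Real Complex

lemma count_integral_poly (r : ℝ) (hr : 0 < r) (f : Polynomial ℂ)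
    (hf : ∀ x ∈ sphere (0:ℂ) r, f.eval x ≠ 0) :
    (∮ x in C((0:ℂ), r), logDeriv (fun y => f.eval y) x)
      = 2 * π * I * (Multiset.card (f.roots.filter (fun z => ‖z‖ < r)) : ℂ) := by
  have hf0 : f ≠ 0 := by
    intro h
    exact hf r (by simp [Complex.dist_eq, abs_of_pos hr]) (by simp [h])
  have hsplit := (IsAlgClosed.splits f).eq_prod_roots
  have hroots : ∀ z ∈ f.roots, ‖z‖ ≠ r := by
    intro z hz h
    exact hf z (by simp [Complex.dist_eq, h]) ((mem_roots hf0).mp hz)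
  have := count_integral r hr f.leadingCoeff (leadingCoeff_ne_zero.mpr hf0) f.roots hroots
  rw [← hsplit] at this
  exact this


lemma det_ne_zero_of_posdef {m : ℕ} (A B : Matrix (Fin m) (Fin m) ℂ)
    (hpos : (Aᴴ * A - Bᴴ * B).PosDef) (t : ℝ) (ht0 : 0 ≤ t) (ht1 : t ≤ 1) :
    (A + (t:ℂ) • B).det ≠ 0 := by
  intro hdet
  obtain ⟨v, hv, hAv⟩ := (Matrix.exists_mulVec_eq_zero_iff).mpr hdet
  have hAv' : A *ᵥ v = -((t:ℂ) • (B *ᵥ v)) := by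
    have := hAv
    rw [add_mulVec, smul_mulVec] at this
    linear_combination (norm := module) this
  set b := B *ᵥ v with hb
  have e1 : ∀ (M : Matrix (Fin m) (Fin m) ℂ), star v ⬝ᵥ ((Mᴴ * M) *ᵥ v)
      = star (M *ᵥ v) ⬝ᵥ (M *ᵥ v) := by
    intro M
    rw [← Matrix.mulVec_mulVec, Matrix.dotProduct_mulVec, ← Matrix.star_mulVec]
  have hp := hpos.dotProduct_mulVec_pos hv
  rw [sub_mulVec, dotProduct_sub, e1, e1, hAv'] at hp
  have hstar : star (-((t:ℂ) • b)) ⬝ᵥ -((t:ℂ) • b)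
      = ((t:ℂ)^2) * (star b ⬝ᵥ b) := by
    simp [star_smul, smul_dotProduct, dotProduct_smul, Complex.conj_ofReal, smul_eq_mul]
    ring
  rw [hstar] at hp
  -- hp : 0 < t^2 * S - S, S := star b ⬝ᵥ b ≥ 0, t^2 ≤ 1
  have hS : (0:ℂ) ≤ star b ⬝ᵥ b := dotProduct_star_self_nonneg b
  have ht2 : ((t:ℂ)^2) ≤ 1 := by
    have : ((t^2 : ℝ) : ℂ) ≤ ((1:ℝ) : ℂ) := by
      rw [Complex.real_le_real]
      nlinarith
    simpa using this
  have : ((t:ℂ)^2) * (star b ⬝ᵥ b) ≤ 1 * (star b ⬝ᵥ b) :=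
    mul_le_mul_of_nonneg_right ht2 hS
  rw [one_mul] at this
  exact hp.not_ge (sub_nonpos.mpr this)



noncomputable def bigE {m : ℕ} (P Q : Matrix (Fin m) (Fin m) (Polynomial ℂ)) : Polynomial (Polynomial ℂ) :=
  (Matrix.of fun i j => (P i j).map (Polynomial.C : ℂ →+* Polynomial ℂ)
      + Polynomial.C (X : Polynomial ℂ) * (Q i j).map Polynomial.C).det

lemma comp_evalRingHom_C (τ : ℂ) : (evalRingHom τ).comp (Polynomial.C : ℂ →+* Polynomial ℂ)
    = RingHom.id ℂ := by
  ext a; simp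

lemma map_bigE {m : ℕ} (P Q : Matrix (Fin m) (Fin m) (Polynomial ℂ)) (τ : ℂ) :
    (bigE P Q).map (evalRingHom τ) = (P + Polynomial.C τ • Q).det := by
  rw [bigE, show ((Matrix.of fun i j => (P i j).map (Polynomial.C : ℂ →+* Polynomial ℂ)
      + Polynomial.C (X : Polynomial ℂ) * (Q i j).map Polynomial.C).det).map (evalRingHom τ)
      = (Polynomial.mapRingHom (evalRingHom τ)) (Matrix.of fun i j =>
        (P i j).map (Polynomial.C : ℂ →+* Polynomial ℂ)
        + Polynomial.C (X : Polynomial ℂ) * (Q i j).map Polynomial.C).det from rfl,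
    RingHom.map_det]
  congr 1
  ext i j
  simp [Polynomial.map_map, comp_evalRingHom_C, smul_eq_mul, Matrix.add_apply]

lemma eval_det_map {m : ℕ} (M : Matrix (Fin m) (Fin m) (Polynomial ℂ)) (x : ℂ) :
    M.det.eval x = (M.map (fun p => p.eval x)).det := by
  have := RingHom.map_det (evalRingHom x) M
  simpa using this

lemma continuous_eval_param (F : Polynomial (Polynomial ℂ)) :
    Continuous fun p : ℝ × ℂ => Polynomial.eval p.2 (F.map (evalRingHom (p.1 : ℂ))) := by
  have h : ∀ p : ℝ × ℂ, Polynomial.eval p.2 (F.map (evalRingHom (p.1 : ℂ)))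
      = ∑ i ∈ Finset.range (F.natDegree + 1),
          Polynomial.eval (p.1 : ℂ) (F.coeff i) * p.2 ^ i := by
    intro p
    rw [Polynomial.eval_map, Polynomial.eval₂_eq_sum_range]; rfl
  simp only [h]
  apply continuous_finset_sum
  intro i _
  exact ((F.coeff i).continuous_aeval.comp
    (Complex.continuous_ofReal.comp continuous_fst)).mul (continuous_snd.pow i)


lemma nat_valued_const {X : Type*} [TopologicalSpace X] [PreconnectedSpace X]
    (f : X → ℝ) (hf : Continuous f) (hn : ∀ x, ∃ n : ℕ, f x = n) (a b : X) : f a = f b := by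
  have key : ∀ u v : X, ¬ f u < f v := by
    intro u v huv
    obtain ⟨nu, hu⟩ := hn u
    obtain ⟨nv, hv⟩ := hn v
    have h1 : (nu : ℝ) + 1/2 ∈ Set.Icc (f u) (f v) := by
      constructor
      · rw [hu]; linarith
      · rw [hv]
        have : nu < nv := by
          rw [hu, hv] at huv; exact_mod_cast huv
        have : (nu : ℝ) + 1 ≤ nv := by exact_mod_cast this
        linarith
    obtain ⟨c, hc⟩ := intermediate_value_univ u v hf h1
    obtain ⟨nc, hnc⟩ := hn c
    rw [hnc] at hc
    have h2 : nu < nc := by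
      have : (nu:ℝ) < nc := by linarith
      exact_mod_cast this
    have : (nu : ℝ) + 1 ≤ nc := by exact_mod_cast h2
    linarith
  rcases lt_trichotomy (f a) (f b) with h | h | h
  · exact absurd h (key a b)
  · exact h
  · exact absurd h (key b a)


/-- Generalized Rouché theorem for matrix polynomials: if
`P(x)ᴴP(x) − Q(x)ᴴQ(x)` is positive definite for all `x` on the circle `|x| = r`,
then `det P(x)` and `det (P(x)+Q(x))` have the same number of roots (with
multiplicity) in the open disk `|x| < r`. -/
theorem stmt9 (m : ℕ) (P Q : Matrix (Fin m) (Fin m) (Polynomial ℂ)) (r : ℝ) (hr : 0 < r)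
    (hpos : ∀ x : ℂ, ‖x‖ = r →
      ((P.map (fun p => p.eval x))ᴴ * P.map (fun p => p.eval x) -
        (Q.map (fun p => p.eval x))ᴴ * Q.map (fun p => p.eval x)).PosDef) :
    Multiset.card (P.det.roots.filter (fun z => ‖z‖ < r)) =
      Multiset.card ((P + Q).det.roots.filter (fun z => ‖z‖ < r)) := by
  -- nonvanishing of the homotopy determinant on the circle
  have hnv : ∀ (t : ℝ), 0 ≤ t → t ≤ 1 → ∀ x ∈ sphere (0:ℂ) r,
      Polynomial.eval x ((bigE P Q).map (evalRingHom (t:ℂ))) ≠ 0 := by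
    intro t ht0 ht1 x hx
    rw [map_bigE, eval_det_map]
    have hxr : ‖x‖ = r := by simpa [Complex.dist_eq] using hx
    have h := det_ne_zero_of_posdef (P.map fun p => p.eval x) (Q.map fun p => p.eval x)
      (hpos x hxr) t ht0 ht1
    have heq : (P + Polynomial.C (t:ℂ) • Q).map (fun p => p.eval x)
        = P.map (fun p => p.eval x) + (t:ℂ) • Q.map (fun p => p.eval x) := by
      ext i j
      simp [Matrix.map_apply, Matrix.add_apply, smul_eq_mul]
    rw [heq]
    exact h
  haveI : PreconnectedSpace (Set.Icc (0:ℝ) 1) := Subtype.preconnectedSpace isPreconnected_Icc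
  set n : Set.Icc (0:ℝ) 1 → ℕ := fun t =>
    Multiset.card ((((bigE P Q).map (evalRingHom ((t:ℝ):ℂ))).roots).filter
      (fun z => ‖z‖ < r)) with hn
  -- the winding integral equals 2πi n t
  have hN : ∀ t : Set.Icc (0:ℝ) 1,
      (∮ x in C((0:ℂ), r),
        logDeriv (fun y => Polynomial.eval y ((bigE P Q).map (evalRingHom ((t:ℝ):ℂ)))) x)
        = 2 * π * I * (n t : ℂ) := fun t =>
    count_integral_poly r hr _ (hnv t t.2.1 t.2.2)
  -- the integral as a parametric interval integral
  have hNint : ∀ t : Set.Icc (0:ℝ) 1,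
      (∮ x in C((0:ℂ), r),
        logDeriv (fun y => Polynomial.eval y ((bigE P Q).map (evalRingHom ((t:ℝ):ℂ)))) x)
        = ∫ θ in (0:ℝ)..(2*π), (circleMap 0 r θ * I) *
            (Polynomial.eval (circleMap 0 r θ) (((bigE P Q).derivative).map (evalRingHom ((t:ℝ):ℂ)))
              / Polynomial.eval (circleMap 0 r θ) ((bigE P Q).map (evalRingHom ((t:ℝ):ℂ)))) := by
    intro t
    simp only [circleIntegral, deriv_circleMap, smul_eq_mul]
    congr 1
    funext θ
    rw [logDeriv_poly_eval, Polynomial.derivative_map]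
  have hcont : Continuous fun t : Set.Icc (0:ℝ) 1 =>
      ∫ θ in (0:ℝ)..(2*π), (circleMap 0 r θ * I) *
            (Polynomial.eval (circleMap 0 r θ) (((bigE P Q).derivative).map (evalRingHom ((t:ℝ):ℂ)))
              / Polynomial.eval (circleMap 0 r θ) ((bigE P Q).map (evalRingHom ((t:ℝ):ℂ)))) := by
    apply intervalIntegral.continuous_parametric_intervalIntegral_of_continuous'
    show Continuous (Function.uncurry fun (t : Set.Icc (0:ℝ) 1) (θ : ℝ) => _)
    have hmap : Continuous fun p : Set.Icc (0:ℝ) 1 × ℝ => (((p.1 : ℝ), circleMap 0 r p.2) : ℝ × ℂ) :=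
      (continuous_subtype_val.comp continuous_fst).prodMk
        ((continuous_circleMap 0 r).comp continuous_snd)
    apply Continuous.mul
    · exact ((continuous_circleMap 0 r).comp continuous_snd).mul continuous_const
    · apply Continuous.div
      · exact (continuous_eval_param (bigE P Q).derivative).comp hmap
      · exact (continuous_eval_param (bigE P Q)).comp hmap
      · intro p
        exact hnv p.1 p.1.2.1 p.1.2.2 _ (circleMap_mem_sphere 0 hr.le p.2)
  -- natural-valued continuous function
  have hg : Continuous fun t : Set.Icc (0:ℝ) 1 =>
      ((∮ x in C((0:ℂ), r),
        logDeriv (fun y => Polynomial.eval y ((bigE P Q).map (evalRingHom ((t:ℝ):ℂ)))) x)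
        / (2 * π * I)).re := by
    refine Complex.continuous_re.comp (Continuous.div_const ?_ _)
    simpa only [← hNint] using hcont
  have h2pi : (2 * (π:ℂ) * I) ≠ 0 := by
    simp [Real.pi_ne_zero, Complex.I_ne_zero, Complex.ofReal_ne_zero]
  have hval : ∀ t : Set.Icc (0:ℝ) 1,
      ((∮ x in C((0:ℂ), r),
        logDeriv (fun y => Polynomial.eval y ((bigE P Q).map (evalRingHom ((t:ℝ):ℂ)))) x)
        / (2 * π * I)).re = (n t : ℝ) := by
    intro t
    rw [hN t, mul_comm, mul_div_assoc, div_self h2pi, mul_one]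
    exact Complex.natCast_re _
  have hkey := nat_valued_const _ hg (fun t => ⟨n t, (hval t).symm ▸ rfl⟩)
    (⟨0, by norm_num⟩ : Set.Icc (0:ℝ) 1) (⟨1, by norm_num⟩ : Set.Icc (0:ℝ) 1)
  rw [hval, hval] at hkey
  have hfin : n ⟨0, by norm_num⟩ = n ⟨1, by norm_num⟩ := by exact_mod_cast hkey
  have e0 : (bigE P Q).map (evalRingHom ((0:ℝ):ℂ)) = P.det := by
    rw [show (((0:ℝ)):ℂ) = 0 by norm_num, map_bigE]
    simp
  have e1 : (bigE P Q).map (evalRingHom ((1:ℝ):ℂ)) = (P + Q).det := by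
    rw [show (((1:ℝ)):ℂ) = 1 by norm_num, map_bigE]
    simp
  have a0 : n ⟨0, by norm_num⟩
      = Multiset.card (P.det.roots.filter (fun z => ‖z‖ < r)) := by
    show Multiset.card ((((bigE P Q).map (evalRingHom ((0:ℝ):ℂ))).roots).filter
      (fun z => ‖z‖ < r)) = _
    rw [e0]
  have a1 : n ⟨1, by norm_num⟩
      = Multiset.card ((P + Q).det.roots.filter (fun z => ‖z‖ < r)) := by
    show Multiset.card ((((bigE P Q).map (evalRingHom ((1:ℝ):ℂ))).roots).filter
      (fun z => ‖z‖ < r)) = _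
    rw [e1]
  rw [← a0, ← a1]
  exact hfin
end

section
/- Let Q(x) = Σ_{i=0, i≠κ}^n B_i x^i be an m×m matrix polynomial and let r > 0 satisfy r^κ > Σ_{i≠κ} ‖B_i‖ r^i. Then for all x with |x| = r, the Hermitian matrix |x|^{2κ} I − Q(x)*Q(x) is positive definite. -/
open Matrix
open scoped ComplexOrder
lemma dot_star_self {m : ℕ} (u : Fin m → ℂ) :
    dotProduct (star u) u = ((∑ i, ‖u i‖ ^ 2 : ℝ) : ℂ) := by
  simp only [dotProduct, Pi.star_apply, Complex.ofReal_sum]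
  refine Finset.sum_congr rfl fun i _ => ?_
  rw [Complex.star_def, ← Complex.normSq_eq_conj_mul_self, Complex.normSq_eq_norm_sq]

lemma sum_norm_sq_eq {m : ℕ} (u : Fin m → ℂ) :
    ∑ i, ‖u i‖ ^ 2 = ‖(WithLp.equiv 2 (Fin m → ℂ)).symm u‖ ^ 2 := by
  rw [EuclideanSpace.norm_eq, Real.sq_sqrt (by positivity)]
  simp [WithLp.equiv_symm_apply]

lemma specNorm_mulVec {m : ℕ} (A : Matrix (Fin m) (Fin m) ℂ) (u : Fin m → ℂ) :
    ∑ i, ‖(A *ᵥ u) i‖ ^ 2 ≤ (specNorm A * ‖(WithLp.equiv 2 (Fin m → ℂ)).symm u‖) ^ 2 := by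
  rw [sum_norm_sq_eq]
  have h1 : (WithLp.equiv 2 (Fin m → ℂ)).symm (A *ᵥ u) =
      Matrix.toEuclideanCLM (𝕜 := ℂ) A ((WithLp.equiv 2 (Fin m → ℂ)).symm u) := by
    rfl
  rw [h1]
  have := (Matrix.toEuclideanCLM (𝕜 := ℂ) A).le_opNorm ((WithLp.equiv 2 (Fin m → ℂ)).symm u)
  have h0 : (0:ℝ) ≤ ‖Matrix.toEuclideanCLM (𝕜 := ℂ) A ((WithLp.equiv 2 (Fin m → ℂ)).symm u)‖ :=
    norm_nonneg _
  unfold specNorm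
  exact pow_le_pow_left₀ h0 this 2

set_option maxHeartbeats 800000 in
set_option synthInstance.maxHeartbeats 400000 in
/-- If `r > 0` satisfies `r^κ > Σ_{i≠κ} ‖B_i‖ r^i` and
`Q(x) = Σ_{i≠κ} B_i x^i`, then for all `x` with `|x| = r` the Hermitian matrix
`|x|^{2κ} I − Q(x)ᴴ Q(x)` is positive definite. -/
theorem stmt10 (m n κ : ℕ) (B : ℕ → Matrix (Fin m) (Fin m) ℂ) (r : ℝ) (hr : 0 < r)
    (hineq : ∑ i ∈ (Finset.range (n + 1)).erase κ, specNorm (B i) * r ^ i < r ^ κ) :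
    ∀ x : ℂ, ‖x‖ = r →
      (((‖x‖ ^ (2 * κ) : ℝ) : ℂ) • (1 : Matrix (Fin m) (Fin m) ℂ) -
        (∑ i ∈ (Finset.range (n + 1)).erase κ, x ^ i • B i)ᴴ *
          (∑ i ∈ (Finset.range (n + 1)).erase κ, x ^ i • B i)).PosDef := by
  intro x hx
  set Q : Matrix (Fin m) (Fin m) ℂ := ∑ i ∈ (Finset.range (n + 1)).erase κ, x ^ i • B i with hQ
  have hQnorm : specNorm Q < r ^ κ := by
    refine lt_of_le_of_lt ?_ hineq
    have : specNorm Q ≤ ∑ i ∈ (Finset.range (n + 1)).erase κ, specNorm (x ^ i • B i) := by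
      unfold specNorm
      rw [hQ, map_sum]
      exact norm_sum_le _ _
    refine this.trans (le_of_eq (Finset.sum_congr rfl fun i _ => ?_))
    unfold specNorm
    rw [_root_.map_smul]
    rw [norm_smul (x ^ i) (Matrix.toEuclideanCLM (𝕜 := ℂ) (B i))]
    simp [hx, mul_comm]
  rw [Matrix.posDef_iff_dotProduct_mulVec]
  constructor
  · unfold Matrix.IsHermitian
    simp [Matrix.conjTranspose_smul, Matrix.conjTranspose_mul, Complex.conj_ofReal]
  · intro v hv
    have hMv : ((((‖x‖ ^ (2 * κ) : ℝ) : ℂ) • (1 : Matrix (Fin m) (Fin m) ℂ) -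
        Qᴴ * Q) *ᵥ v) = ((‖x‖ ^ (2 * κ) : ℝ) : ℂ) • v - Qᴴ *ᵥ (Q *ᵥ v) := by
      rw [Matrix.sub_mulVec, Matrix.smul_mulVec, Matrix.one_mulVec, ← Matrix.mulVec_mulVec]
    rw [hMv]
    have hdot : dotProduct (star v) (((‖x‖ ^ (2 * κ) : ℝ) : ℂ) • v - Qᴴ *ᵥ (Q *ᵥ v))
        = ((‖x‖ ^ (2 * κ) : ℝ) : ℂ) * dotProduct (star v) v
          - dotProduct (star (Q *ᵥ v)) (Q *ᵥ v) := by
      rw [dotProduct_sub, dotProduct_smul, Matrix.dotProduct_mulVec,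
        ← Matrix.star_mulVec]
      simp [smul_eq_mul]
    rw [hdot, dot_star_self, dot_star_self]
    have key : (0:ℝ) < ‖x‖ ^ (2 * κ) * (∑ i, ‖v i‖ ^ 2) - ∑ i, ‖(Q *ᵥ v) i‖ ^ 2 := by
      have hQv := specNorm_mulVec Q v
      have hvnorm : (0:ℝ) < ‖(WithLp.equiv 2 (Fin m → ℂ)).symm v‖ := by
        rw [norm_pos_iff]
        simpa using hv
      have hv2 : ∑ i, ‖v i‖ ^ 2 = ‖(WithLp.equiv 2 (Fin m → ℂ)).symm v‖ ^ 2 := sum_norm_sq_eq v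
      have hQ0 : (0:ℝ) ≤ specNorm Q := norm_nonneg _
      have habs : ‖x‖ ^ (2 * κ) = (r ^ κ) ^ 2 := by
        rw [hx, ← pow_mul, mul_comm]
      rw [habs, hv2]
      have h1 : specNorm Q * ‖(WithLp.equiv 2 (Fin m → ℂ)).symm v‖
          < r ^ κ * ‖(WithLp.equiv 2 (Fin m → ℂ)).symm v‖ :=
        mul_lt_mul_of_pos_right hQnorm hvnorm
      have h2 : (specNorm Q * ‖(WithLp.equiv 2 (Fin m → ℂ)).symm v‖) ^ 2
          < (r ^ κ * ‖(WithLp.equiv 2 (Fin m → ℂ)).symm v‖) ^ 2 :=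
        pow_lt_pow_left₀ h1 (by positivity) (by norm_num)
      rw [mul_pow] at h2
      linarith
    have : (((‖x‖ ^ (2 * κ) : ℝ) : ℂ) * ((∑ i, ‖v i‖ ^ 2 : ℝ) : ℂ)
        - ((∑ i, ‖(Q *ᵥ v) i‖ ^ 2 : ℝ) : ℂ))
        = ((‖x‖ ^ (2 * κ) * (∑ i, ‖v i‖ ^ 2) - ∑ i, ‖(Q *ᵥ v) i‖ ^ 2 : ℝ) : ℂ) := by
      push_cast; ring
    rw [this]
    exact_mod_cast Complex.zero_lt_real.mpr key
end
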